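/- Let h : [0,L] → ℝ be continuous and positive, and let f : [0,L] → ℝ be continuously differentiable. Set R := ∫_0^L h(s)^{-1} ds. Then f(0)² ≤ 2R ( (1/L²) ∫_0^L f(t)² h(t) dt + ∫_0^L f'(t)² h(t) dt ). -/

import Mathlib

open MeasureTheory intervalIntegral Set

/-!
Let `c` minimise `f²` on `[0, L]`, so that `f 0 ^ 2 ≤ 2 f c ^ 2 + 2 (f c - f 0) ^ 2`.
Everything rests on the weighted Cauchy–Schwarz inequality `(∫ g)² ≤ (∫ g² h) (∫ h⁻¹)`.
With `g = 1` it gives `L² ≤ (∫ h) R`, so `f c ^ 2 ≤ (∫ f² h) / ∫ h ≤ (R / L²) ∫ f² h`;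
with `g = f'` on `[0, c]` it gives `(f c - f 0) ^ 2 ≤ R ∫ f'² h`.
-/

theorem sq_integral_le_integral_sq_mul_mul_integral_inv {α : Type*} [MeasurableSpace α]
    {μ : Measure α} {g w : α → ℝ} (hw : ∀ᵐ x ∂μ, 0 < w x) (hg : Integrable g μ)
    (hgw : Integrable (fun x ↦ g x ^ 2 * w x) μ) (hw_inv : Integrable (fun x ↦ (w x)⁻¹) μ) :
    (∫ x, g x ∂μ) ^ 2 ≤ (∫ x, g x ^ 2 * w x ∂μ) * ∫ x, (w x)⁻¹ ∂μ := by
  set A := ∫ x, g x ^ 2 * w x ∂μ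
  set B := ∫ x, g x ∂μ
  set C := ∫ x, (w x)⁻¹ ∂μ
  -- `∫ (g - l / w)² w ≥ 0` is a quadratic polynomial in `l`.
  have hquad : ∀ l : ℝ, 0 ≤ C * (l * l) + (-2 * B) * l + A := by
    intro l
    have hnn : 0 ≤ ∫ x, (g x ^ 2 * w x - 2 * l * g x + l ^ 2 * (w x)⁻¹) ∂μ := by
      refine integral_nonneg_of_ae (hw.mono fun x hx ↦ ?_)
      calc (0 : ℝ) ≤ (g x - l * (w x)⁻¹) ^ 2 * w x := by positivity
        _ = g x ^ 2 * w x - 2 * l * g x + l ^ 2 * (w x)⁻¹ := by field_simp [hx.ne']; ring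
    have hgw_sub : Integrable (fun x ↦ g x ^ 2 * w x - 2 * l * g x) μ := hgw.sub (hg.const_mul _)
    rw [integral_add hgw_sub (hw_inv.const_mul _),
      integral_sub hgw (hg.const_mul _), MeasureTheory.integral_const_mul,
      MeasureTheory.integral_const_mul] at hnn
    linarith
  have := discrim_le_zero hquad
  rw [discrim] at this
  linarith

section Weighted

variable {a b : ℝ} {h : ℝ → ℝ}

theorem sq_intervalIntegral_le_integral_sq_mul_mul_integral_inv (hab : a ≤ b) {g : ℝ → ℝ}
    (hg : ContinuousOn g (Icc a b)) (hh : ContinuousOn h (Icc a b))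
    (hpos : ∀ t ∈ Icc a b, 0 < h t) :
    (∫ t in a..b, g t) ^ 2 ≤ (∫ t in a..b, g t ^ 2 * h t) * ∫ t in a..b, (h t)⁻¹ := by
  have hint {u : ℝ → ℝ} (hu : ContinuousOn u (Icc a b)) : IntegrableOn u (Ioc a b) :=
    hu.integrableOn_Icc.mono_set Ioc_subset_Icc_self
  simp only [integral_of_le hab]
  exact sq_integral_le_integral_sq_mul_mul_integral_inv
    ((ae_restrict_mem measurableSet_Ioc).mono fun t ht ↦ hpos t (Ioc_subset_Icc_self ht))
    (hint hg) (hint ((hg.pow 2).mul hh)) (hint (hh.inv₀ fun t ht ↦ (hpos t ht).ne'))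

theorem sq_mul_sq_le_integral_sq_mul_mul_integral_inv_of_isMinOn {f : ℝ → ℝ} {c : ℝ}
    (hab : a ≤ b) (hf : ContinuousOn f (Icc a b)) (hh : ContinuousOn h (Icc a b))
    (hpos : ∀ t ∈ Icc a b, 0 < h t) (hmin : IsMinOn (fun t ↦ f t ^ 2) (Icc a b) c) :
    f c ^ 2 * (b - a) ^ 2 ≤ (∫ t in a..b, f t ^ 2 * h t) * ∫ t in a..b, (h t)⁻¹ := by
  have hvol : (b - a) ^ 2 ≤ (∫ t in a..b, h t) * ∫ t in a..b, (h t)⁻¹ := by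
    simpa using sq_intervalIntegral_le_integral_sq_mul_mul_integral_inv hab
      continuousOn_const hh hpos (g := fun _ ↦ 1)
  have hmass : f c ^ 2 * ∫ t in a..b, h t ≤ ∫ t in a..b, f t ^ 2 * h t := by
    rw [← intervalIntegral.integral_const_mul]
    refine integral_mono_on hab ?_ ?_ fun t ht ↦ mul_le_mul_of_nonneg_right (hmin ht) (hpos t ht).le
    · exact (continuousOn_const.mul hh).intervalIntegrable_of_Icc hab
    · exact ((hf.pow 2).mul hh).intervalIntegrable_of_Icc hab
  have hR : 0 ≤ ∫ t in a..b, (h t)⁻¹ := integral_nonneg hab fun t ht ↦ (inv_pos.2 (hpos t ht)).le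
  calc f c ^ 2 * (b - a) ^ 2 ≤ f c ^ 2 * ((∫ t in a..b, h t) * ∫ t in a..b, (h t)⁻¹) := by
        gcongr
    _ ≤ (∫ t in a..b, f t ^ 2 * h t) * ∫ t in a..b, (h t)⁻¹ := by
        rw [← mul_assoc]; gcongr

theorem sq_sub_le_integral_sq_deriv_mul_mul_integral_inv {f f' : ℝ → ℝ} {c : ℝ}
    (hc_mem : c ∈ Icc a b) (hderiv : ∀ t ∈ Icc a b, HasDerivAt f (f' t) t)
    (hf' : ContinuousOn f' (Icc a b)) (hh : ContinuousOn h (Icc a b))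
    (hpos : ∀ t ∈ Icc a b, 0 < h t) :
    (f c - f a) ^ 2 ≤ (∫ t in a..b, f' t ^ 2 * h t) * ∫ t in a..b, (h t)⁻¹ := by
  obtain ⟨hac, hcb⟩ := hc_mem
  have hab := hac.trans hcb
  have hsub : Icc a c ⊆ Icc a b := Icc_subset_Icc_right hcb
  have hftc : ∫ t in a..c, f' t = f c - f a :=
    integral_eq_sub_of_hasDerivAt (fun t ht ↦ hderiv t (hsub (uIcc_of_le hac ▸ ht)))
      ((hf'.mono hsub).intervalIntegrable_of_Icc hac)
  have hmono {u : ℝ → ℝ} (hu : ContinuousOn u (Icc a b)) (hnn : ∀ t ∈ Icc a b, 0 ≤ u t) :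
      ∫ t in a..c, u t ≤ ∫ t in a..b, u t :=
    integral_mono_interval le_rfl hac hcb
      ((ae_restrict_mem measurableSet_Ioc).mono fun t ht ↦ hnn t (Ioc_subset_Icc_self ht))
      (hu.intervalIntegrable_of_Icc hab)
  rw [← hftc]
  calc (∫ t in a..c, f' t) ^ 2
      ≤ (∫ t in a..c, f' t ^ 2 * h t) * ∫ t in a..c, (h t)⁻¹ :=
        sq_intervalIntegral_le_integral_sq_mul_mul_integral_inv hac (hf'.mono hsub)
          (hh.mono hsub) fun t ht ↦ hpos t (hsub ht)
    _ ≤ (∫ t in a..b, f' t ^ 2 * h t) * ∫ t in a..b, (h t)⁻¹ := by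
        refine mul_le_mul ?_ ?_ ?_ ?_
        · exact hmono ((hf'.pow 2).mul hh) fun t ht ↦ mul_nonneg (sq_nonneg _) (hpos t ht).le
        · exact hmono (hh.inv₀ fun t ht ↦ (hpos t ht).ne') fun t ht ↦ (inv_pos.2 (hpos t ht)).le
        · exact integral_nonneg hac fun t ht ↦ (inv_pos.2 (hpos t (hsub ht))).le
        · exact integral_nonneg hab fun t ht ↦ mul_nonneg (sq_nonneg _) (hpos t ht).le

end Weighted

/-- Trace inequality along a ray with the `L²` mass term scaled by `1/L²`,
with constant given by the resistance `R = ∫₀ᴸ h⁻¹`. -/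
theorem trace_inequality_ray_resistance (L : ℝ) (hL : 0 < L)
    (h : ℝ → ℝ) (hc : ContinuousOn h (Set.Icc (0 : ℝ) L))
    (hpos : ∀ t ∈ Set.Icc (0 : ℝ) L, 0 < h t)
    (f f' : ℝ → ℝ)
    (hderiv : ∀ t ∈ Set.Icc (0 : ℝ) L, HasDerivAt f (f' t) t)
    (hcont : ContinuousOn f' (Set.Icc (0 : ℝ) L)) :
    (f 0) ^ 2 ≤
      2 * (∫ s in (0 : ℝ)..L, (h s)⁻¹) *
        ((1 / L ^ 2) * (∫ t in (0 : ℝ)..L, (f t) ^ 2 * h t) +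
          ∫ t in (0 : ℝ)..L, (f' t) ^ 2 * h t) := by
  set R := ∫ s in (0 : ℝ)..L, (h s)⁻¹
  set M₀ := ∫ t in (0 : ℝ)..L, f t ^ 2 * h t
  set M₁ := ∫ t in (0 : ℝ)..L, f' t ^ 2 * h t
  have hf : ContinuousOn f (Icc 0 L) := fun t ht ↦ (hderiv t ht).continuousAt.continuousWithinAt
  obtain ⟨c, hc_mem, hmin⟩ := isCompact_Icc.exists_isMinOn (nonempty_Icc.2 hL.le) (hf.pow 2)
  have hmass : f c ^ 2 ≤ M₀ * R / L ^ 2 := by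
    rw [le_div_iff₀ (by positivity)]
    simpa using sq_mul_sq_le_integral_sq_mul_mul_integral_inv_of_isMinOn hL.le hf hc hpos hmin
  have henergy : (f c - f 0) ^ 2 ≤ M₁ * R :=
    sq_sub_le_integral_sq_deriv_mul_mul_integral_inv hc_mem hderiv hcont hc hpos
  calc f 0 ^ 2 ≤ 2 * f c ^ 2 + 2 * (f c - f 0) ^ 2 := by
        linear_combination sq_nonneg (2 * f c - f 0)
    _ ≤ 2 * (M₀ * R / L ^ 2) + 2 * (M₁ * R) := by gcongr
    _ = 2 * R * (1 / L ^ 2 * M₀ + M₁) := by ring
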